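/- arXiv:0704.0665 — 4 statements merged into one kernel-verified Lean document; each statement's English description precedes it below -/
import Mathlib

section
/- Let N ≥ 1 be an integer, let t₀ < t₁ < ⋯ < t_N be real numbers, set I_j = [t_{j−1}, t_j] for 1 ≤ j ≤ N, and let 0 < a ≤ 1. Assume that for all integers p, q with 1 ≤ p ≤ q ≤ N there exists j with p ≤ j ≤ q and t_j − t_{j−1} ≥ a·(t_q − t_{p−1}). Then there exist a positive integer K with K ≥ log N / log(2a^{−1}) and distinct indices j₁, …, j_K ∈ {1,…,N} such that t_{j_k} − t_{j_k − 1} ≥ 2·(t_{j_{k+1}} − t_{j_{k+1} − 1}) for all 1 ≤ k < K, and such that for every t* ∈ I_{j_K} and every 1 ≤ k ≤ K one has dist(t*, I_{j_k}) ≤ (2/a)·(t_{j_k} − t_{j_k − 1}). -/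
open Set

noncomputable section


private lemma gap_sum (c : ℝ) (f : ℕ → ℝ) :
    ∀ w : ℕ, (∀ i < w, c < f (i + 1) - f i) →
      (w : ℝ) * c ≤ f w - f 0 ∧ (1 ≤ w → (w : ℝ) * c < f w - f 0) := by
  intro w
  induction w with
  | zero =>
    intro _
    refine ⟨by simp, by omega⟩
  | succ n ih =>
    intro h
    have h1 := (ih (fun i hi => h i (by omega))).1
    have h2 := h n (by omega)
    constructor
    · push_cast; nlinarith
    · intro _; push_cast; nlinarith

private lemma t_mono (N : ℕ) (t : ℕ → ℝ) (hmono : ∀ i < N, t i < t (i + 1)) :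
    ∀ i k, i ≤ k → k ≤ N → t i ≤ t k := by
  intro i k
  induction k with
  | zero =>
    intro h _
    have : i = 0 := by omega
    rw [this]
  | succ n ih =>
    intro hik hn
    rcases Nat.lt_or_ge i (n + 1) with h | h
    · have h1 : t i ≤ t n := ih (by omega) (by omega)
      have h2 : t n < t (n + 1) := hmono n (by omega)
      linarith
    · have : i = n + 1 := by omega
      rw [this]

private lemma cascade_aux (N : ℕ) (t : ℕ → ℝ)
    (hmono : ∀ i < N, t i < t (i + 1)) (a : ℝ) (ha : 0 < a) (ha1 : a ≤ 1)
    (hblock : ∀ p q : ℕ, 1 ≤ p → p ≤ q → q ≤ N →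
      ∃ j, p ≤ j ∧ j ≤ q ∧ a * (t q - t (p - 1)) ≤ t j - t (j - 1))
    (V : ℕ) (hV2 : 2 ≤ V) (hVb : 2 * a⁻¹ - 1 ≤ (V : ℝ)) :
    ∀ s p q : ℕ, 1 ≤ p → p ≤ q → q ≤ N → V ^ s ≤ q + 1 - p →
      ∃ j : ℕ → ℕ,
        (∀ k ≤ s, p ≤ j k ∧ j k ≤ q) ∧
        (∀ k < s, 2 * (t (j (k + 1)) - t (j (k + 1) - 1)) ≤ t (j k) - t (j k - 1)) ∧
        (∀ tstar ∈ Set.Icc (t (j s - 1)) (t (j s)), ∀ k ≤ s,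
          Metric.infDist tstar (Set.Icc (t (j k - 1)) (t (j k)))
            ≤ (2 / a) * (t (j k) - t (j k - 1))) := by
  intro s
  induction s with
  | zero =>
    intro p q hp hpq hqN _
    refine ⟨fun _ => q, fun k _ => ⟨hpq, le_rfl⟩, by omega, ?_⟩
    intro tstar hts k hk
    have h0 : Metric.infDist tstar (Set.Icc (t (q - 1)) (t q)) = 0 :=
      Metric.infDist_zero_of_mem hts
    have hlen : t (q - 1) < t q := by
      have h := hmono (q - 1) (by omega)
      have hq1 : q - 1 + 1 = q := by omega
      rwa [hq1] at h
    have h2a : 0 < 2 / a := by positivity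
    rw [h0]
    nlinarith
  | succ s ih =>
    intro p q hp hpq hqN hcount
    obtain ⟨j₀, hj₀p, hj₀q, hj₀big⟩ := hblock p q hp hpq hqN
    obtain ⟨m, hm⟩ : ∃ m, V ^ s = m := ⟨_, rfl⟩
    rw [pow_succ, hm] at hcount
    have hm1 : 1 ≤ m := by rw [← hm]; exact Nat.one_le_pow _ _ (by omega)
    have hℓpos : 0 < t j₀ - t (j₀ - 1) := by
      have h := hmono (j₀ - 1) (by omega)
      have h1 : j₀ - 1 + 1 = j₀ := by omega
      rw [h1] at h; linarith
    obtain ⟨ℓ, hℓ⟩ : ∃ x : ℝ, t j₀ - t (j₀ - 1) = x := ⟨_, rfl⟩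
    rw [hℓ] at hℓpos hj₀big
    have hwin : ∃ p' q' : ℕ, 1 ≤ p' ∧ p ≤ p' ∧ q' ≤ q ∧ q' + 1 - p' = m ∧
        t q' - t (p' - 1) ≤ ℓ / 2 := by
      obtain ⟨wl, r1, hr1, e1⟩ : ∃ w r, r < m ∧ j₀ - p = m * w + r :=
        ⟨(j₀ - p) / m, (j₀ - p) % m, Nat.mod_lt _ (by omega), (Nat.div_add_mod _ _).symm⟩
      obtain ⟨wr, r2, hr2, e2⟩ : ∃ w r, r < m ∧ q - j₀ = m * w + r :=
        ⟨(q - j₀) / m, (q - j₀) % m, Nat.mod_lt _ (by omega), (Nat.div_add_mod _ _).symm⟩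
      have hVw : V ≤ wl + wr + 1 := by
        by_contra hcon
        push_neg at hcon
        have h1 : m * (wl + wr + 2) ≤ m * V := Nat.mul_le_mul_left m (by omega)
        have h2 : m * (wl + wr + 2) = m * wl + m * wr + 2 * m := by ring
        omega
      by_cases hA : ∃ i < wl, t (p - 1 + (i + 1) * m) - t (p - 1 + i * m) ≤ ℓ / 2
      · obtain ⟨i, hi, hilen⟩ := hA
        have h1 : (i + 1) * m ≤ wl * m := Nat.mul_le_mul_right _ (by omega)
        have h2 : wl * m = m * wl := by ring
        have h3 : (i + 1) * m = i * m + m := by ring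
        refine ⟨p + i * m, p + i * m + (m - 1), by omega, by omega, by omega, by omega, ?_⟩
        have e3 : p + i * m + (m - 1) = p - 1 + (i + 1) * m := by omega
        have e4 : p + i * m - 1 = p - 1 + i * m := by omega
        rw [e3, e4]
        exact hilen
      · by_cases hB : ∃ i < wr, t (j₀ + (i + 1) * m) - t (j₀ + i * m) ≤ ℓ / 2
        · obtain ⟨i, hi, hilen⟩ := hB
          have h1 : (i + 1) * m ≤ wr * m := Nat.mul_le_mul_right _ (by omega)
          have h2 : wr * m = m * wr := by ring
          have h3 : (i + 1) * m = i * m + m := by ring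
          refine ⟨j₀ + 1 + i * m, j₀ + 1 + i * m + (m - 1), by omega, by omega, by omega,
            by omega, ?_⟩
          have e3 : j₀ + 1 + i * m + (m - 1) = j₀ + (i + 1) * m := by omega
          have e4 : j₀ + 1 + i * m - 1 = j₀ + i * m := by omega
          rw [e3, e4]
          exact hilen
        · exfalso
          push_neg at hA hB
          have hgl := gap_sum (ℓ / 2) (fun i => t (p - 1 + i * m)) wl (by
            intro i hi
            simpa using hA i hi)
          have hgr := gap_sum (ℓ / 2) (fun i => t (j₀ + i * m)) wr (by
            intro i hi
            simpa using hB i hi)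
          have hltop : t (p - 1 + wl * m) ≤ t (j₀ - 1) := by
            have h2 : wl * m = m * wl := by ring
            exact t_mono N t hmono _ _ (by omega) (by omega)
          have hrtop : t (j₀ + wr * m) ≤ t q := by
            have h2 : wr * m = m * wr := by ring
            exact t_mono N t hmono _ _ (by omega) (by omega)
          have hsimp0 : p - 1 + 0 * m = p - 1 := by omega
          have hsimp1 : j₀ + 0 * m = j₀ := by omega
          rw [hsimp0] at hgl
          rw [hsimp1] at hgr
          have hstrict : ((wl : ℝ) + wr) * (ℓ / 2) < (t (j₀ - 1) - t (p - 1)) + (t q - t j₀) := by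
            rcases Nat.lt_or_ge 0 wl with hwl1 | hwl0
            · have hl := hgl.2 (by omega)
              have hr := hgr.1
              nlinarith
            · have hwl0' : wl = 0 := by omega
              have hwr1 : 1 ≤ wr := by omega
              have hr := hgr.2 hwr1
              have hl := hgl.1
              rw [hwl0'] at hl ⊢
              push_cast
              nlinarith
          have hcastV : (V : ℝ) ≤ (wl : ℝ) + (wr : ℝ) + 1 := by exact_mod_cast hVw
          have hainv : 0 < a⁻¹ := by positivity
          have hLle : t q - t (p - 1) ≤ a⁻¹ * ℓ := by
            have h1 : a⁻¹ * (a * (t q - t (p - 1))) ≤ a⁻¹ * ℓ :=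
              mul_le_mul_of_nonneg_left hj₀big (le_of_lt hainv)
            have h2 : a⁻¹ * (a * (t q - t (p - 1))) = (a⁻¹ * a) * (t q - t (p - 1)) := by ring
            rw [h2, inv_mul_cancel₀ (ne_of_gt ha), one_mul] at h1
            exact h1
          have hlow : (2 * a⁻¹ - 2) * (ℓ / 2) ≤ ((wl : ℝ) + wr) * (ℓ / 2) := by
            apply mul_le_mul_of_nonneg_right _ (by linarith)
            linarith
          have hring : (2 * a⁻¹ - 2) * (ℓ / 2) = a⁻¹ * ℓ - ℓ := by ring
          linarith [hℓ]
    obtain ⟨p', q', hp'1, hpp', hq'q, hcnt, hshort⟩ := hwin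
    have hp'q' : p' ≤ q' := by omega
    obtain ⟨j', hj'in, hj'chain, hj'dist⟩ := ih p' q' hp'1 hp'q' (le_trans hq'q hqN)
      (by omega)
    refine ⟨fun k => Nat.rec j₀ (fun n _ => j' n) k, ?_, ?_, ?_⟩
    · intro k hk
      cases k with
      | zero => exact ⟨hj₀p, hj₀q⟩
      | succ n =>
        have h := hj'in n (by omega)
        exact ⟨le_trans hpp' h.1, le_trans h.2 hq'q⟩
    · intro k hk
      cases k with
      | zero =>
        show 2 * (t (j' 0) - t (j' 0 - 1)) ≤ t j₀ - t (j₀ - 1)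
        have h := hj'in 0 (by omega)
        have h1 : t (j' 0) ≤ t q' := t_mono N t hmono _ _ h.2 (le_trans hq'q hqN)
        have h2 : t (p' - 1) ≤ t (j' 0 - 1) := t_mono N t hmono _ _ (by omega) (by
          have := h.2
          have hq'N := le_trans hq'q hqN
          omega)
        rw [hℓ]
        linarith
      | succ n =>
        exact hj'chain n (by omega)
    · intro tstar hts k hk
      have hts' : tstar ∈ Set.Icc (t (j' s - 1)) (t (j' s)) := hts
      cases k with
      | succ n =>
        exact hj'dist tstar hts' n (by omega)
      | zero =>
        show Metric.infDist tstar (Set.Icc (t (j₀ - 1)) (t j₀))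
          ≤ (2 / a) * (t j₀ - t (j₀ - 1))
        have hmem : t j₀ ∈ Set.Icc (t (j₀ - 1)) (t j₀) := ⟨by linarith [hℓ], le_rfl⟩
        have h1 : Metric.infDist tstar (Set.Icc (t (j₀ - 1)) (t j₀)) ≤ dist tstar (t j₀) :=
          Metric.infDist_le_dist_of_mem hmem
        have hjs := hj'in s le_rfl
        have hq'N := le_trans hq'q hqN
        have hb1 : t (p' - 1) ≤ t (j' s - 1) :=
          t_mono N t hmono _ _ (by omega) (by have := hjs.2; omega)
        have hb2 : t (j' s) ≤ t q' := t_mono N t hmono _ _ hjs.2 hq'N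
        have hb3 : t (p - 1) ≤ t (p' - 1) := t_mono N t hmono _ _ (by omega) (by omega)
        have hb4 : t q' ≤ t q := t_mono N t hmono _ _ hq'q hqN
        have hb5 : t (p - 1) ≤ t (j₀ - 1) := t_mono N t hmono _ _ (by omega) (by omega)
        have hb6 : t j₀ ≤ t q := t_mono N t hmono _ _ hj₀q hqN
        have hts1 := hts'.1
        have hts2 := hts'.2
        have hdist : dist tstar (t j₀) ≤ t q - t (p - 1) := by
          rw [Real.dist_eq, abs_le]
          constructor <;> linarith
        have hainv : 0 < a⁻¹ := by positivity
        have hLle : t q - t (p - 1) ≤ a⁻¹ * ℓ := by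
          have hh1 : a⁻¹ * (a * (t q - t (p - 1))) ≤ a⁻¹ * ℓ :=
            mul_le_mul_of_nonneg_left hj₀big (le_of_lt hainv)
          have hh2 : a⁻¹ * (a * (t q - t (p - 1))) = (a⁻¹ * a) * (t q - t (p - 1)) := by ring
          rw [hh2, inv_mul_cancel₀ (ne_of_gt ha), one_mul] at hh1
          exact hh1
        have hfin : a⁻¹ * ℓ ≤ (2 / a) * ℓ := by
          have h2 : (2 / a) * ℓ = 2 * (a⁻¹ * ℓ) := by
            rw [div_eq_mul_inv]
            ring
          have h3 : 0 ≤ a⁻¹ * ℓ := by positivity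
          linarith
        rw [hℓ]
        calc Metric.infDist tstar (Set.Icc (t (j₀ - 1)) (t j₀)) ≤ dist tstar (t j₀) := h1
          _ ≤ t q - t (p - 1) := hdist
          _ ≤ a⁻¹ * ℓ := hLle
          _ ≤ (2 / a) * ℓ := hfin

/-- Interval cascade: if an interval `[t₀, t_N]` tiled by the consecutive intervals
`I_j = [t_{j-1}, t_j]` has the property that every consecutive block of tiles contains a tile
of proportion at least `a` of the block, then one can find a cascade of
`K ≥ log N / log (2/a)` tiles with geometrically decreasing lengths, all of which stay
within distance `(2/a)` times their own length of any point of the last tile. -/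
theorem interval_cascade (N : ℕ) (hN : 1 ≤ N) (t : ℕ → ℝ)
    (hmono : ∀ i < N, t i < t (i + 1)) (a : ℝ) (ha : 0 < a) (ha1 : a ≤ 1)
    (hblock : ∀ p q : ℕ, 1 ≤ p → p ≤ q → q ≤ N →
      ∃ j, p ≤ j ∧ j ≤ q ∧ a * (t q - t (p - 1)) ≤ t j - t (j - 1)) :
    ∃ K : ℕ, 0 < K ∧ Real.log N / Real.log (2 * a⁻¹) ≤ (K : ℝ) ∧
      ∃ j : ℕ → ℕ,
        (∀ k < K, 1 ≤ j k ∧ j k ≤ N) ∧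
        (∀ k l, k < K → l < K → j k = j l → k = l) ∧
        (∀ k, k + 1 < K →
          2 * (t (j (k + 1)) - t (j (k + 1) - 1)) ≤ t (j k) - t (j k - 1)) ∧
        (∀ tstar ∈ Set.Icc (t (j (K - 1) - 1)) (t (j (K - 1))),
          ∀ k < K,
            Metric.infDist tstar (Set.Icc (t (j k - 1)) (t (j k)))
              ≤ (2 / a) * (t (j k) - t (j k - 1))) := by
  have hainv : 0 < a⁻¹ := by positivity
  have hainv1 : (1 : ℝ) ≤ a⁻¹ := by
    nlinarith [mul_inv_cancel₀ (ne_of_gt ha)]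
  obtain ⟨b, hb⟩ : ∃ b : ℝ, 2 * a⁻¹ = b := ⟨_, rfl⟩
  have hb2 : (2 : ℝ) ≤ b := by rw [← hb]; linarith
  have hb1 : (1 : ℝ) < b := by linarith
  have hlogb : 0 < Real.log b := Real.log_pos hb1
  obtain ⟨V, hV⟩ : ∃ V : ℕ, max 2 (⌈b⌉₊ - 1) = V := ⟨_, rfl⟩
  have hceil2 : 2 ≤ ⌈b⌉₊ := by
    have h := Nat.lt_ceil.mpr (show ((1 : ℕ) : ℝ) < b by exact_mod_cast hb1)
    omega
  have hV2 : 2 ≤ V := by rw [← hV]; exact le_max_left _ _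
  have hceilcast : ((⌈b⌉₊ - 1 : ℕ) : ℝ) = (⌈b⌉₊ : ℝ) - 1 := by
    rw [Nat.cast_sub (by omega)]
    simp
  have hVb : b - 1 ≤ (V : ℝ) := by
    have h1 : b ≤ (⌈b⌉₊ : ℝ) := Nat.le_ceil b
    have h3 : (⌈b⌉₊ - 1 : ℕ) ≤ V := by rw [← hV]; exact le_max_right _ _
    have h4 : ((⌈b⌉₊ - 1 : ℕ) : ℝ) ≤ (V : ℝ) := by exact_mod_cast h3
    linarith
  have hVle : (V : ℝ) ≤ b := by
    have h1 : (⌈b⌉₊ : ℝ) < b + 1 := Nat.ceil_lt_add_one (by linarith)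
    have h3 : V = max 2 (⌈b⌉₊ - 1) := hV.symm
    rcases max_cases 2 (⌈b⌉₊ - 1) with ⟨hmax, _⟩ | ⟨hmax, _⟩ <;> rw [hmax] at h3
    · rw [h3]; push_cast; linarith
    · rw [h3]; rw [hceilcast]; linarith
  obtain ⟨K, hK⟩ : ∃ K : ℕ, max 1 ⌈Real.log N / Real.log b⌉₊ = K := ⟨_, rfl⟩
  have hK1 : 1 ≤ K := by rw [← hK]; exact le_max_left _ _
  have hlogK : Real.log N / Real.log b ≤ (K : ℝ) := by
    have h1 : Real.log N / Real.log b ≤ (⌈Real.log N / Real.log b⌉₊ : ℝ) := Nat.le_ceil _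
    have h2 : ⌈Real.log N / Real.log b⌉₊ ≤ K := by rw [← hK]; exact le_max_right _ _
    have h3 : ((⌈Real.log N / Real.log b⌉₊ : ℕ) : ℝ) ≤ (K : ℝ) := by exact_mod_cast h2
    linarith
  have hVKN : V ^ (K - 1) ≤ N := by
    rcases Nat.eq_or_lt_of_le hK1 with h | h
    · rw [← h]
      simpa using hN
    · have hceilK : ⌈Real.log N / Real.log b⌉₊ = K := by
        have h2 : (1 : ℕ) ≤ ⌈Real.log N / Real.log b⌉₊ ∨
            max 1 ⌈Real.log N / Real.log b⌉₊ = 1 := by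
          rcases le_or_gt 1 ⌈Real.log N / Real.log b⌉₊ with hh | hh
          · exact Or.inl hh
          · right
            have h0 : ⌈Real.log N / Real.log b⌉₊ = 0 := by omega
            simp [h0]
        rcases h2 with hh | hh
        · rw [← hK]; omega
        · rw [hh] at hK; omega
      have hlt : ((K - 1 : ℕ) : ℝ) < Real.log N / Real.log b := by
        have h1 : K - 1 < ⌈Real.log N / Real.log b⌉₊ := by omega
        exact Nat.lt_ceil.mp h1
      have hNpos : (0 : ℝ) < (N : ℝ) := by exact_mod_cast hN
      have hbpos : (0 : ℝ) < b := by linarith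
      have hpow : b ^ (K - 1) < (N : ℝ) := by
        have h1 : ((K - 1 : ℕ) : ℝ) * Real.log b < Real.log N := by
          rw [← lt_div_iff₀ hlogb]
          exact hlt
        have h2 : Real.log (b ^ (K - 1)) < Real.log N := by
          rw [Real.log_pow]
          exact h1
        have h3 : (0 : ℝ) < b ^ (K - 1) := pow_pos hbpos _
        exact (Real.log_lt_log_iff h3 hNpos).mp h2
      have hVpow : ((V ^ (K - 1) : ℕ) : ℝ) ≤ b ^ (K - 1) := by
        push_cast
        exact pow_le_pow_left₀ (by positivity) hVle _
      have hfin : ((V ^ (K - 1) : ℕ) : ℝ) < (N : ℝ) := lt_of_le_of_lt hVpow hpow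
      exact_mod_cast hfin.le
  obtain ⟨j, hjin, hjchain, hjdist⟩ := cascade_aux N t hmono a ha ha1 hblock V hV2
    (by rw [hb]; linarith) (K - 1) 1 N le_rfl hN le_rfl (by simpa using hVKN)
  have hjin' : ∀ k < K, 1 ≤ j k ∧ j k ≤ N := fun k hk => hjin k (by omega)
  have hlenpos : ∀ k < K, 0 < t (j k) - t (j k - 1) := by
    intro k hk
    obtain ⟨h1, h2⟩ := hjin' k hk
    have h := hmono (j k - 1) (by omega)
    have h3 : j k - 1 + 1 = j k := by omega
    rw [h3] at h
    linarith
  have hdec : ∀ k l, k < l → l < K → t (j l) - t (j l - 1) < t (j k) - t (j k - 1) := by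
    intro k l hkl hlK
    induction l with
    | zero => omega
    | succ n ihn =>
      have hstep : t (j (n + 1)) - t (j (n + 1) - 1) < t (j n) - t (j n - 1) := by
        have hc := hjchain n (by omega)
        have hp := hlenpos (n + 1) hlK
        linarith
      rcases Nat.lt_or_ge k n with h | h
      · have := ihn h (by omega)
        linarith
      · have : k = n := by omega
        rw [this]
        exact hstep
  rw [hb]
  refine ⟨K, by omega, hlogK, j, hjin', ?_, fun k hk => hjchain k (by omega), ?_⟩
  · intro k l hk hl heq
    rcases lt_trichotomy k l with h | h | h
    · exfalso
      have := hdec k l h hl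
      rw [heq] at this
      linarith
    · exact h
    · exfalso
      have := hdec l k h hk
      rw [heq] at this
      linarith
  · intro tstar hts k hk
    exact hjdist tstar hts k (by omega)

end
end

section
/- Let n ≥ 5, set C₁ = 6n, and let η ∈ (0,1) and C_M > 0. Let t₀ < t₁ < ⋯ < t_N be real numbers, set I = [t₀, t_N] and I_j = [t_{j−1}, t_j], and let u : ℝ × ℝⁿ → ℂ be measurable. Assume: (i) for every 1 ≤ j ≤ N and every t ∈ I_j, ∫_{{x : ‖x‖ ≤ η^{−3C₁}(t_j − t_{j−1})^{1/2}}} |u(t,x)|² dx ≥ η^{C₁}·(t_j − t_{j−1}); and (ii) ∫_I ∫_{{x : ‖x‖ ≤ 2η^{−3C₁}(t_N − t₀)^{1/2}}} |u(t,x)|²/‖x‖³ dx dt ≤ C_M · η^{−3C₁} · (t_N − t₀)^{1/2}. Then Σ_{j=1}^N (t_j − t_{j−1})^{1/2} ≤ C_M · η^{−13C₁} · (t_N − t₀)^{1/2}. -/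
/-! Tile `I_j` carries mass `≥ η^{C₁}|I_j|` in a ball of radius `r_j = η^{-3C₁}|I_j|^{1/2}` at every
time, and on that ball `‖x‖⁻³ ≥ r_j⁻³`, so `I_j` contributes at least
`η^{C₁}|I_j| · r_j⁻³ · |I_j| = η^{10C₁}|I_j|^{1/2}` to the Morawetz integral over `I`
(the balls fit inside the Morawetz ball since `|I_j| ≤ |I|`). Summing over the disjoint tiles and
comparing with the Morawetz bound gives `η^{10C₁} ∑_j |I_j|^{1/2} ≤ C_M η^{-3C₁}|I|^{1/2}`. -/

open MeasureTheory Set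
open scoped ENNReal NNReal

noncomputable section

abbrev En (n : ℕ) := EuclideanSpace ℝ (Fin n)

theorem lintegral_Ico_eq_sum_lintegral_Ico {μ : Measure ℝ} (F : ℝ → ℝ≥0∞) {t : ℕ → ℝ} {N : ℕ}
    (ht : MonotoneOn t (Iic N)) :
    ∫⁻ s in Ico (t 0) (t N), F s ∂μ
      = ∑ j ∈ Finset.range N, ∫⁻ s in Ico (t j) (t (j + 1)), F s ∂μ := by
  induction N with
  | zero => simp
  | succ N ih =>
    have hN : t N ≤ t (N + 1) := ht (by simp) (by simp) N.le_succ
    rw [Finset.sum_range_succ, ← ih (ht.mono (Iic_subset_Iic.2 N.le_succ)),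
      ← lintegral_union measurableSet_Ico Ico_disjoint_Ico_same,
      Ico_union_Ico_eq_Ico (ht (by simp) (by simp) N.zero_le) hN]

theorem ofReal_mul_le_setLIntegral_Ico {F : ℝ → ℝ≥0∞} {a b c : ℝ} (hab : a ≤ b)
    (hF : ∀ s ∈ Ico a b, ENNReal.ofReal c ≤ F s) :
    ENNReal.ofReal (c * (b - a)) ≤ ∫⁻ s in Ico a b, F s := by
  rw [ENNReal.ofReal_mul' (sub_nonneg.2 hab), ← Real.volume_Ico, ← setLIntegral_const]
  exact setLIntegral_mono' measurableSet_Ico hF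

section NormBall

variable {E : Type*} [NormedAddCommGroup E] [MeasurableSpace E] [OpensMeasurableSpace E]
  {μ : Measure E} {r R : ℝ}

theorem setLIntegral_div_pow_le_setLIntegral_div_norm_pow (f : E → ℝ≥0∞) (k : ℕ)
    (hr : 0 < r) (hrR : r ≤ R) :
    (∫⁻ x in {x : E | ‖x‖ ≤ r}, f x ∂μ) / ENNReal.ofReal (r ^ k)
      ≤ ∫⁻ x in {x : E | ‖x‖ ≤ R}, f x / (‖x‖₊ : ℝ≥0∞) ^ k ∂μ := by
  have hrk : (ENNReal.ofReal (r ^ k))⁻¹ ≠ ∞ := by simp [pow_pos hr k]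
  calc (∫⁻ x in {x : E | ‖x‖ ≤ r}, f x ∂μ) / ENNReal.ofReal (r ^ k)
      = ∫⁻ x in {x : E | ‖x‖ ≤ r}, f x / ENNReal.ofReal (r ^ k) ∂μ := by
        simp only [div_eq_mul_inv, lintegral_mul_const' _ _ hrk]
    _ ≤ ∫⁻ x in {x : E | ‖x‖ ≤ r}, f x / (‖x‖₊ : ℝ≥0∞) ^ k ∂μ := by
        refine setLIntegral_mono' (measurableSet_le (by fun_prop) measurable_const) fun x hx => ?_
        gcongr
        rw [← enorm_eq_nnnorm, ← ofReal_norm, ← ENNReal.ofReal_pow (norm_nonneg x)]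
        exact ENNReal.ofReal_le_ofReal (pow_le_pow_left₀ (norm_nonneg x) hx k)
    _ ≤ ∫⁻ x in {x : E | ‖x‖ ≤ R}, f x / (‖x‖₊ : ℝ≥0∞) ^ k ∂μ :=
        lintegral_mono_set fun x (hx : ‖x‖ ≤ r) => hx.trans hrR

theorem ofReal_div_pow_mul_le_lintegral_Ico_lintegral_div_norm_pow (f : ℝ → E → ℝ≥0∞) (k : ℕ)
    {a b m : ℝ} (hab : a ≤ b) (hr : 0 < r) (hrR : r ≤ R)
    (hmass : ∀ s ∈ Ico a b, ENNReal.ofReal m ≤ ∫⁻ x in {x : E | ‖x‖ ≤ r}, f s x ∂μ) :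
    ENNReal.ofReal (m / r ^ k * (b - a))
      ≤ ∫⁻ s in Ico a b, ∫⁻ x in {x : E | ‖x‖ ≤ R}, f s x / (‖x‖₊ : ℝ≥0∞) ^ k ∂μ := by
  refine ofReal_mul_le_setLIntegral_Ico hab fun s hs => ?_
  rw [ENNReal.ofReal_div_of_pos (pow_pos hr k)]
  exact (ENNReal.div_le_div_right (hmass s hs) _).trans
    (setLIntegral_div_pow_le_setLIntegral_div_norm_pow (f s) k hr hrR)

end NormBall

theorem pow_mul_div_mul_sqrt_pow_three_mul (η : ℝ) {ℓ : ℝ} (hℓ : 0 ≤ ℓ) (C : ℕ) :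
    η ^ C * ℓ / ((η ^ (3 * C))⁻¹ * √ℓ) ^ 3 * ℓ = η ^ (10 * C) * √ℓ := by
  obtain ⟨s, hs, rfl⟩ : ∃ s, 0 ≤ s ∧ ℓ = s ^ 2 := ⟨√ℓ, Real.sqrt_nonneg ℓ, (Real.sq_sqrt hℓ).symm⟩
  rw [Real.sqrt_sq hs]
  rcases hs.eq_or_lt with rfl | hs
  · simp
  field_simp
  ring

theorem sum_sqrt_lengths_bound_general (n : ℕ) (C₁ : ℕ)
    (η : ℝ) (hη0 : 0 < η) (CM : ℝ) (hCM : 0 < CM)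
    (N : ℕ) (t : ℕ → ℝ) (hmono : ∀ i < N, t i < t (i + 1))
    (u : ℝ × En n → ℂ)
    (hconc : ∀ j < N, ∀ s ∈ Set.Icc (t j) (t (j + 1)),
      ENNReal.ofReal (η ^ C₁ * (t (j + 1) - t j))
        ≤ ∫⁻ x in {x : En n | ‖x‖ ≤ (η ^ (3 * C₁))⁻¹ * Real.sqrt (t (j + 1) - t j)},
            (‖u (s, x)‖₊ : ℝ≥0∞) ^ 2)
    (hmorawetz :
      (∫⁻ s in Set.Icc (t 0) (t N),
        ∫⁻ x in {x : En n | ‖x‖ ≤ 2 * (η ^ (3 * C₁))⁻¹ * Real.sqrt (t N - t 0)},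
          (‖u (s, x)‖₊ : ℝ≥0∞) ^ 2 / (‖x‖₊ : ℝ≥0∞) ^ 3)
        ≤ ENNReal.ofReal (CM * (η ^ (3 * C₁))⁻¹ * Real.sqrt (t N - t 0))) :
    (∑ j ∈ Finset.range N, Real.sqrt (t (j + 1) - t j))
      ≤ CM * (η ^ (13 * C₁))⁻¹ * Real.sqrt (t N - t 0) := by
  have ht : MonotoneOn t (Iic N) :=
    monotoneOn_of_le_add_one ordConnected_Iic fun i _ _ hi => (hmono i hi).le
  set F : ℝ → ℝ≥0∞ := fun s => ∫⁻ x in {x : En n | ‖x‖ ≤ 2 * (η ^ (3 * C₁))⁻¹ * √(t N - t 0)},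
    (‖u (s, x)‖₊ : ℝ≥0∞) ^ 2 / (‖x‖₊ : ℝ≥0∞) ^ 3
  have htile : ∀ j < N,
      ENNReal.ofReal (η ^ (10 * C₁) * √(t (j + 1) - t j)) ≤ ∫⁻ s in Ico (t j) (t (j + 1)), F s := by
    intro j hj
    have hℓ : 0 < t (j + 1) - t j := sub_pos.2 (hmono j hj)
    have hℓN : √(t (j + 1) - t j) ≤ √(t N - t 0) := Real.sqrt_le_sqrt <|
      sub_le_sub (ht (by simp; omega) (by simp) hj) (ht (by simp) (by simp; omega) j.zero_le)
    rw [← pow_mul_div_mul_sqrt_pow_three_mul η hℓ.le]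
    refine ofReal_div_pow_mul_le_lintegral_Ico_lintegral_div_norm_pow _ 3 (hmono j hj).le
      (by have := Real.sqrt_pos.2 hℓ; positivity) ?_ fun s hs => hconc j hj s (Ico_subset_Icc_self hs)
    have : 0 ≤ (η ^ (3 * C₁))⁻¹ := by positivity
    nlinarith [Real.sqrt_nonneg (t (j + 1) - t j)]
  have hsum : ENNReal.ofReal (η ^ (10 * C₁) * ∑ j ∈ Finset.range N, √(t (j + 1) - t j))
      ≤ ENNReal.ofReal (CM * (η ^ (3 * C₁))⁻¹ * √(t N - t 0)) :=
    calc _ = ∑ j ∈ Finset.range N, ENNReal.ofReal (η ^ (10 * C₁) * √(t (j + 1) - t j)) := by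
          rw [Finset.mul_sum, ENNReal.ofReal_sum_of_nonneg fun j _ => by positivity]
      _ ≤ ∑ j ∈ Finset.range N, ∫⁻ s in Ico (t j) (t (j + 1)), F s :=
          Finset.sum_le_sum fun j hj => htile j (Finset.mem_range.1 hj)
      _ = ∫⁻ s in Ico (t 0) (t N), F s := (lintegral_Ico_eq_sum_lintegral_Ico F ht).symm
      _ ≤ ∫⁻ s in Icc (t 0) (t N), F s := lintegral_mono_set Ico_subset_Icc_self
      _ ≤ _ := hmorawetz
  have hreal := (ENNReal.ofReal_le_ofReal_iff (by positivity)).1 hsum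
  rw [show 13 * C₁ = 3 * C₁ + 10 * C₁ by ring, pow_add, mul_inv, ← mul_assoc,
    mul_right_comm, ← div_eq_mul_inv]
  exact (le_div_iff₀' (by positivity)).2 hreal

/-- Summing the local mass concentration bounds against the Morawetz bound:
if on each tile `I_j = [t_{j-1}, t_j]` the solution concentrates mass
`≥ η^{C₁}|I_j|` in the ball of radius `η^{-3C₁}|I_j|^{1/2}`, while the Morawetz
quantity over `I = [t₀, t_N]` is bounded by `C_M η^{-3C₁}|I|^{1/2}`, then
`∑_j |I_j|^{1/2} ≤ C_M η^{-13C₁} |I|^{1/2}`. Here `C₁ = 6n`. -/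
theorem sum_sqrt_lengths_bound (n : ℕ) (hn : 5 ≤ n) (C₁ : ℕ) (hC₁ : C₁ = 6 * n)
    (η : ℝ) (hη0 : 0 < η) (hη1 : η < 1) (CM : ℝ) (hCM : 0 < CM)
    (N : ℕ) (t : ℕ → ℝ) (hmono : ∀ i < N, t i < t (i + 1))
    (u : ℝ × En n → ℂ) (hu : Measurable u)
    (hconc : ∀ j < N, ∀ s ∈ Set.Icc (t j) (t (j + 1)),
      ENNReal.ofReal (η ^ C₁ * (t (j + 1) - t j))
        ≤ ∫⁻ x in {x : En n | ‖x‖ ≤ (η ^ (3 * C₁))⁻¹ * Real.sqrt (t (j + 1) - t j)},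
            (‖u (s, x)‖₊ : ℝ≥0∞) ^ 2)
    (hmorawetz :
      (∫⁻ s in Set.Icc (t 0) (t N),
        ∫⁻ x in {x : En n | ‖x‖ ≤ 2 * (η ^ (3 * C₁))⁻¹ * Real.sqrt (t N - t 0)},
          (‖u (s, x)‖₊ : ℝ≥0∞) ^ 2 / (‖x‖₊ : ℝ≥0∞) ^ 3)
        ≤ ENNReal.ofReal (CM * (η ^ (3 * C₁))⁻¹ * Real.sqrt (t N - t 0))) :
    (∑ j ∈ Finset.range N, Real.sqrt (t (j + 1) - t j))
      ≤ CM * (η ^ (13 * C₁))⁻¹ * Real.sqrt (t N - t 0) :=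
  sum_sqrt_lengths_bound_general n C₁ η hη0 CM hCM N t hmono u hconc hmorawetz

end
end

section
/- Let n ≥ 5, set C₁ = 6n, and let D > 0. There exists η₀ ∈ (0,1), depending only on n and D, with the following property: for every η ∈ (0, η₀), every measurable f : ℝⁿ → ℂ with ∫_{ℝⁿ} |f(x)|^{2n/(n−2)} dx ≤ D, every positive integer K, and all positive reals ℓ₁, …, ℓ_K satisfying ℓ_k ≥ 2·ℓ_{k+1} for 1 ≤ k < K, if for every 1 ≤ k ≤ K one has ∫_{{x : η^{C₁} ℓ_k^{1/2} ≤ ‖x‖ ≤ η^{−27C₁} ℓ_k^{1/2}}} |f(x)|² dx ≥ η^{C₁} ℓ_k, then K ≤ η^{−100C₁}. -/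
open MeasureTheory Set
open scoped ENNReal NNReal

noncomputable section

/-!
On an annulus of outer radius `r = η^{-27C₁} √ℓ`, the `L²` mass `η^{C₁} ℓ = η^{55C₁} r²` forces,
by Hölder's inequality with exponents `n/(n-2)` and `n/2`, an `L^{2n/(n-2)}` mass of at least
`c η^{55C₁ n/(n-2)} ≥ c η^{92C₁}`, with `c > 0` depending only on `n`. Scales
`m = 56⌈η^{-C₁}⌉` indices apart differ by a factor `2^m > η^{-56C₁}`, which separates the
corresponding annuli, so the annuli of every `m`-th index are disjoint and the budget `D` admits
at most `D η^{-92C₁} / c` of them. Hence `K ≲ m D η^{-92C₁} ≲ D η^{-93C₁}`, which is below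
`η^{-100C₁}` once `η` is small.
-/

open Metric Module

theorem lintegral_le_lintegral_rpow_mul_measure_univ {α : Type*} [MeasurableSpace α]
    (μ : Measure α) {p q : ℝ} (hpq : p.HolderConjugate q) {g : α → ℝ≥0∞}
    (hg : AEMeasurable g μ) :
    ∫⁻ x, g x ∂μ ≤ (∫⁻ x, g x ^ p ∂μ) ^ (1 / p) * μ univ ^ (1 / q) := by
  simpa using ENNReal.lintegral_mul_le_Lp_mul_Lq μ hpq hg (aemeasurable_const (b := 1))

theorem two_pow_sub_mul_le_of_two_mul_succ_le {ℓ : ℕ → ℝ} {K : ℕ}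
    (h : ∀ k, k + 1 < K → 2 * ℓ (k + 1) ≤ ℓ k) {i j : ℕ} (hij : i ≤ j) (hj : j < K) :
    2 ^ (j - i) * ℓ j ≤ ℓ i := by
  induction j, hij using Nat.le_induction with
  | base => simp
  | succ j hij ih =>
    calc 2 ^ (j + 1 - i) * ℓ (j + 1) = 2 ^ (j - i) * (2 * ℓ (j + 1)) := by
          rw [Nat.sub_add_comm hij, pow_succ]; ring
      _ ≤ 2 ^ (j - i) * ℓ j := by gcongr; exact h j hj
      _ ≤ ℓ i := ih (by omega)

theorem pow_lt_two_pow_mul_ceil {t : ℝ} (ht : 0 ≤ t) {k : ℕ} (hk : k ≠ 0) :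
    t ^ k < 2 ^ (k * ⌈t⌉₊) := by
  have : t < 2 ^ ⌈t⌉₊ := (Nat.le_ceil t).trans_lt (by exact_mod_cast Nat.lt_two_pow_self)
  rw [mul_comm, pow_mul]
  exact pow_lt_pow_left₀ this ht hk

theorem ceil_inv_mul_le_two {s : ℝ} (hs0 : 0 < s) (hs1 : s ≤ 1) : ⌈s⁻¹⌉₊ * s ≤ 2 := by
  have h1 : 1 ≤ s⁻¹ := one_le_inv₀ hs0 |>.mpr hs1
  calc ⌈s⁻¹⌉₊ * s ≤ (s⁻¹ + s⁻¹) * s := by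
        gcongr
        linarith [Nat.ceil_lt_add_one (inv_nonneg.mpr hs0.le)]
    _ = 2 := by field_simp; ring

theorem ceilDiv_mul_le_measure_univ {α : Type*} [MeasurableSpace α] (ν : Measure α)
    {A : ℕ → Set α} (hA : ∀ k, MeasurableSet (A k)) {c : ℝ≥0∞} {K m : ℕ} (hm : 0 < m)
    (hc : ∀ k < K, c ≤ ν (A k)) (hdisj : ∀ i j, i + m ≤ j → j < K → Disjoint (A i) (A j)) :
    (K ⌈/⌉ m : ℕ) * c ≤ ν univ := by
  have hlt : ∀ j < K ⌈/⌉ m, m * j < K := fun j hj =>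
    not_le.mp fun h => hj.not_ge ((ceilDiv_le_iff_le_mul hm).mpr h)
  have hpair : (Finset.range (K ⌈/⌉ m) : Set ℕ).PairwiseDisjoint (fun j => A (m * j)) := by
    intro i hi j hj hij
    simp only [Finset.coe_range, mem_Iio] at hi hj
    rcases hij.lt_or_gt with h | h
    · exact hdisj _ _ (by nlinarith) (hlt j hj)
    · exact (hdisj _ _ (by nlinarith) (hlt i hi)).symm
  calc (K ⌈/⌉ m : ℕ) * c = ∑ _j ∈ Finset.range (K ⌈/⌉ m), c := by simp
    _ ≤ ∑ j ∈ Finset.range (K ⌈/⌉ m), ν (A (m * j)) :=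
      Finset.sum_le_sum fun j hj => hc _ (hlt j (Finset.mem_range.mp hj))
    _ = ν (⋃ j ∈ Finset.range (K ⌈/⌉ m), A (m * j)) :=
      (measure_biUnion_finset hpair fun j _ => hA _).symm
    _ ≤ ν univ := measure_mono (subset_univ _)

section Annulus

variable {E : Type*} [SeminormedAddCommGroup E]

def annulus (a b : ℝ) : Set E := {x | a ≤ ‖x‖ ∧ ‖x‖ ≤ b}

theorem measurableSet_annulus [MeasurableSpace E] [OpensMeasurableSpace E] (a b : ℝ) :
    MeasurableSet (annulus a b : Set E) :=
  continuous_norm.measurable measurableSet_Icc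

theorem annulus_subset_closedBall (a b : ℝ) : (annulus a b : Set E) ⊆ closedBall 0 b :=
  fun _ hx => mem_closedBall_zero_iff.mpr hx.2

theorem disjoint_annulus_mul_sqrt {a b ℓ ℓ' : ℝ} (ha : 0 ≤ a) (hℓ' : 0 ≤ ℓ')
    (h : b ^ 2 * ℓ' < a ^ 2 * ℓ) :
    Disjoint (annulus (a * √ℓ) (b * √ℓ) : Set E) (annulus (a * √ℓ') (b * √ℓ')) := by
  have hsep : b * √ℓ' < a * √ℓ :=
    calc b * √ℓ' ≤ |b| * √ℓ' := by gcongr; exact le_abs_self b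
      _ = √(b ^ 2 * ℓ') := by rw [Real.sqrt_mul (sq_nonneg b), Real.sqrt_sq_eq_abs]
      _ < √(a ^ 2 * ℓ) := Real.sqrt_lt_sqrt (by positivity) h
      _ = a * √ℓ := by rw [Real.sqrt_mul (sq_nonneg a), Real.sqrt_sq ha]
  exact disjoint_left.mpr fun x hx hx' => (hx.1.trans hx'.2).not_gt hsep

theorem disjoint_annulus_of_two_pow_mul_le {η : ℝ} (hη : 0 < η) {C : ℕ} {ℓ ℓ' : ℝ}
    (hℓ' : 0 < ℓ') (h : 2 ^ (56 * ⌈(η ^ C)⁻¹⌉₊) * ℓ' ≤ ℓ) :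
    Disjoint (annulus (η ^ C * √ℓ) ((η ^ (27 * C))⁻¹ * √ℓ) : Set E)
      (annulus (η ^ C * √ℓ') ((η ^ (27 * C))⁻¹ * √ℓ')) := by
  rw [pow_mul']
  set s := η ^ C
  have hs : 0 < s := by positivity
  have key : s⁻¹ ^ 56 * ℓ' < ℓ :=
    (mul_lt_mul_of_pos_right (pow_lt_two_pow_mul_ceil (by positivity) (by norm_num)) hℓ').trans_le h
  refine disjoint_annulus_mul_sqrt hs.le hℓ'.le ?_
  calc (s ^ 27)⁻¹ ^ 2 * ℓ' = s ^ 2 * (s⁻¹ ^ 56 * ℓ') := by field_simp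
    _ < s ^ 2 * ℓ := by gcongr

end Annulus

section HaarMeasure

variable {E : Type*} [NormedAddCommGroup E] [NormedSpace ℝ E] [FiniteDimensional ℝ E]
  [MeasurableSpace E] [BorelSpace E] (μ : Measure E) [μ.IsAddHaarMeasure]

theorem measure_rpow_le_of_subset_closedBall {n : ℕ} (hn : finrank ℝ E = n) (hn0 : n ≠ 0)
    {s : ℝ} (hs : 0 ≤ s) {A : Set E} {x : E} {r : ℝ} (hr : 0 ≤ r) (hA : A ⊆ closedBall x r) :
    μ A ^ (s / n) ≤ μ (ball 0 1) ^ (s / n) * ENNReal.ofReal (r ^ s) := by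
  calc μ A ^ (s / n) ≤ μ (closedBall x r) ^ (s / n) := by gcongr
    _ = μ (ball 0 1) ^ (s / n) * ENNReal.ofReal (r ^ s) := by
      rw [μ.addHaar_closedBall x hr, hn, ENNReal.mul_rpow_of_nonneg _ _ (by positivity),
        ENNReal.ofReal_rpow_of_nonneg (by positivity) (by positivity), ← Real.rpow_natCast,
        ← Real.rpow_mul hr, mul_div_cancel₀ _ (by positivity), mul_comm]

theorem ofReal_rpow_le_mul_setLIntegral_of_le_setLIntegral_sq {n : ℕ} (hn : finrank ℝ E = n)
    (h2n : 2 < n) {g : E → ℝ≥0∞} (hg : Measurable g) {A : Set E} {x : E} {r c : ℝ} (hr : 0 < r)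
    (hA : A ⊆ closedBall x r) (hc : ENNReal.ofReal (c * r ^ 2) ≤ ∫⁻ y in A, g y ^ 2 ∂μ) :
    ENNReal.ofReal c ^ ((n : ℝ) / (n - 2)) ≤
      μ (ball 0 1) ^ (2 / ((n : ℝ) - 2)) * ∫⁻ y in A, g y ^ (2 * (n : ℝ) / (n - 2)) ∂μ := by
  have hn2 : (0 : ℝ) < n - 2 := by
    have : (2 : ℝ) < n := by exact_mod_cast h2n
    linarith
  set p : ℝ := n / (n - 2) with hp
  have hp0 : 0 < p := by positivity
  have hpq : p.HolderConjugate (n / 2) := by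
    rw [Real.holderConjugate_iff, hp, lt_div_iff₀ hn2]
    refine ⟨by linarith, ?_⟩
    field_simp
    ring
  set I := ∫⁻ y in A, g y ^ (2 * (n : ℝ) / (n - 2)) ∂μ
  have hHolder : ∫⁻ y in A, g y ^ 2 ∂μ ≤
      I ^ (1 / p) * (μ (ball 0 1) ^ (2 / (n : ℝ)) * ENNReal.ofReal (r ^ 2)) := by
    calc ∫⁻ y in A, g y ^ 2 ∂μ = ∫⁻ y in A, g y ^ (2 : ℝ) ∂μ := by simp
      _ ≤ (∫⁻ y in A, (g y ^ (2 : ℝ)) ^ p ∂μ) ^ (1 / p) * μ.restrict A univ ^ (1 / (n / 2 : ℝ)) :=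
        lintegral_le_lintegral_rpow_mul_measure_univ _ hpq (hg.pow_const _).aemeasurable
      _ ≤ I ^ (1 / p) * (μ (ball 0 1) ^ (2 / (n : ℝ)) * ENNReal.ofReal (r ^ 2)) := by
        simp only [← ENNReal.rpow_mul, Measure.restrict_apply_univ, one_div_div]
        rw [← Real.rpow_two r, hp, ← mul_div_assoc]
        gcongr
        exact measure_rpow_le_of_subset_closedBall μ hn (by omega) zero_le_two hr.le hA
  have hr2 : ENNReal.ofReal (r ^ 2) ≠ 0 := by positivity
  have hcI : ENNReal.ofReal c ≤ I ^ (1 / p) * μ (ball 0 1) ^ (2 / (n : ℝ)) := by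
    rw [ENNReal.ofReal_mul' (sq_nonneg r)] at hc
    rw [← mul_assoc] at hHolder
    exact (ENNReal.mul_le_mul_iff_left hr2 ENNReal.ofReal_ne_top).mp (hc.trans hHolder)
  calc ENNReal.ofReal c ^ p ≤ (I ^ (1 / p) * μ (ball 0 1) ^ (2 / (n : ℝ))) ^ p := by gcongr
    _ = μ (ball 0 1) ^ (2 / ((n : ℝ) - 2)) * I := by
      rw [ENNReal.mul_rpow_of_nonneg _ _ hp0.le, ← ENNReal.rpow_mul, ← ENNReal.rpow_mul,
        one_div_mul_cancel hp0.ne', ENNReal.rpow_one, mul_comm, hp]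
      congr 2
      field_simp

theorem ofReal_pow_rpow_le_of_le_setLIntegral_annulus {n : ℕ} (hn : finrank ℝ E = n)
    (h2n : 2 < n) {g : E → ℝ≥0∞} (hg : Measurable g) {C : ℕ} {η ℓ : ℝ} (hη : 0 < η)
    (hℓ : 0 < ℓ)
    (h : ENNReal.ofReal (η ^ C * ℓ) ≤
      ∫⁻ x in annulus (η ^ C * √ℓ) ((η ^ (27 * C))⁻¹ * √ℓ), g x ^ 2 ∂μ) :
    ENNReal.ofReal (η ^ (55 * C)) ^ ((n : ℝ) / (n - 2)) ≤
      μ (ball 0 1) ^ (2 / ((n : ℝ) - 2)) *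
        ∫⁻ x in annulus (η ^ C * √ℓ) ((η ^ (27 * C))⁻¹ * √ℓ), g x ^ (2 * (n : ℝ) / (n - 2)) ∂μ := by
  refine ofReal_rpow_le_mul_setLIntegral_of_le_setLIntegral_sq μ hn h2n hg (by positivity)
    (annulus_subset_closedBall _ _) ?_
  convert h using 2
  rw [mul_pow, Real.sq_sqrt hℓ.le, show 55 * C = C + 27 * C * 2 by ring, pow_add, pow_mul]
  field_simp

theorem ceilDiv_mul_ofReal_pow_rpow_le_of_le_setLIntegral_annulus {n : ℕ}
    (hn : finrank ℝ E = n) (h2n : 2 < n) {C : ℕ} {η : ℝ} (hη : 0 < η) {g : E → ℝ≥0∞}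
    (hg : Measurable g) {K : ℕ} {ℓ : ℕ → ℝ} (hℓ : ∀ k < K, 0 < ℓ k)
    (hstep : ∀ k, k + 1 < K → 2 * ℓ (k + 1) ≤ ℓ k)
    (hmass : ∀ k < K, ENNReal.ofReal (η ^ C * ℓ k) ≤
      ∫⁻ x in annulus (η ^ C * √(ℓ k)) ((η ^ (27 * C))⁻¹ * √(ℓ k)), g x ^ 2 ∂μ) :
    (K ⌈/⌉ (56 * ⌈(η ^ C)⁻¹⌉₊) : ℕ) * ENNReal.ofReal (η ^ (55 * C)) ^ ((n : ℝ) / (n - 2)) ≤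
      μ (ball 0 1) ^ (2 / ((n : ℝ) - 2)) * ∫⁻ x, g x ^ (2 * (n : ℝ) / (n - 2)) ∂μ := by
  set N := ⌈(η ^ C)⁻¹⌉₊
  set ν := μ (ball 0 1) ^ (2 / ((n : ℝ) - 2)) • μ.withDensity fun x => g x ^ (2 * (n : ℝ) / (n - 2))
  have hν : ∀ s, MeasurableSet s → ν s =
      μ (ball 0 1) ^ (2 / ((n : ℝ) - 2)) * ∫⁻ x in s, g x ^ (2 * (n : ℝ) / (n - 2)) ∂μ :=
    fun s hs => by rw [Measure.smul_apply, withDensity_apply _ hs, smul_eq_mul]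
  rw [← setLIntegral_univ, ← hν univ MeasurableSet.univ]
  refine ceilDiv_mul_le_measure_univ ν (A := fun k => annulus (η ^ C * √(ℓ k))
    ((η ^ (27 * C))⁻¹ * √(ℓ k))) (fun k => measurableSet_annulus _ _)
    (Nat.mul_pos (by norm_num) (Nat.ceil_pos.mpr (by positivity))) (fun k hk => ?_)
    (fun i j hij hj => ?_)
  · rw [hν _ (measurableSet_annulus _ _)]
    exact ofReal_pow_rpow_le_of_le_setLIntegral_annulus μ hn h2n hg hη (hℓ k hk) (hmass k hk)
  · refine disjoint_annulus_of_two_pow_mul_le hη (hℓ j hj) ?_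
    calc 2 ^ (56 * N) * ℓ j ≤ 2 ^ (j - i) * ℓ j := by
          gcongr
          · exact (hℓ j hj).le
          · exact one_le_two
          · omega
      _ ≤ ℓ i := two_pow_sub_mul_le_of_two_mul_succ_le hstep (by omega) hj

theorem natCast_mul_pow_le_of_le_setLIntegral_annulus {n : ℕ} (hn : finrank ℝ E = n)
    (h5n : 5 ≤ n) {C : ℕ} (hC : C ≠ 0) {η : ℝ} (hη0 : 0 < η) (hη1 : η ≤ 1) {g : E → ℝ≥0∞}
    (hg : Measurable g) {B : ℝ≥0} (hB : ∫⁻ x, g x ^ (2 * (n : ℝ) / (n - 2)) ∂μ ≤ B)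
    {K : ℕ} {ℓ : ℕ → ℝ} (hℓ : ∀ k < K, 0 < ℓ k)
    (hstep : ∀ k, k + 1 < K → 2 * ℓ (k + 1) ≤ ℓ k)
    (hmass : ∀ k < K, ENNReal.ofReal (η ^ C * ℓ k) ≤
      ∫⁻ x in annulus (η ^ C * √(ℓ k)) ((η ^ (27 * C))⁻¹ * √(ℓ k)), g x ^ 2 ∂μ) :
    (K : ℝ) * η ^ (100 * C) ≤ 112 * (μ (ball 0 1) ^ (2 / ((n : ℝ) - 2))).toReal * B * η := by
  have h5n' : (5 : ℝ) ≤ n := by exact_mod_cast h5n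
  have hn2 : (0 : ℝ) < n - 2 := by linarith
  set V := μ (ball 0 1) ^ (2 / ((n : ℝ) - 2))
  have hV : V ≠ ⊤ := ENNReal.rpow_ne_top_of_nonneg (by positivity) measure_ball_lt_top.ne
  set p : ℝ := n / (n - 2)
  set N := ⌈(η ^ C)⁻¹⌉₊
  set J := K ⌈/⌉ (56 * N)
  have hJ : (J : ℝ) * (η ^ (55 * C)) ^ p ≤ V.toReal * B := by
    have hcount : (J : ℝ≥0∞) * ENNReal.ofReal (η ^ (55 * C)) ^ p ≤ V * B :=
      (ceilDiv_mul_ofReal_pow_rpow_le_of_le_setLIntegral_annulus μ hn (by omega) hη0 hg hℓ hstep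
        hmass).trans (by gcongr)
    rw [ENNReal.ofReal_rpow_of_nonneg (by positivity) (by positivity), ← ENNReal.ofReal_natCast,
      ← ENNReal.ofReal_mul (by positivity),
      ENNReal.ofReal_le_iff_le_toReal (ENNReal.mul_ne_top hV ENNReal.coe_ne_top)] at hcount
    simpa using hcount
  have hKJ : (K : ℝ) ≤ J * (56 * N) := by
    rw [mul_comm]
    exact_mod_cast le_smul_ceilDiv (by positivity : 0 < 56 * N)
  have hp : η ^ (92 * C) ≤ (η ^ (55 * C)) ^ p := by
    have hp53 : p ≤ 5 / 3 := by rw [div_le_iff₀ hn2]; linarith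
    rw [← Real.rpow_natCast, ← Real.rpow_natCast, ← Real.rpow_mul hη0.le]
    refine Real.rpow_le_rpow_of_exponent_ge hη0 hη1 ?_
    push_cast
    nlinarith [(Nat.cast_nonneg C : (0 : ℝ) ≤ C)]
  have hNη : N * η ^ C ≤ 2 := ceil_inv_mul_le_two (by positivity) (pow_le_one₀ hη0.le hη1)
  have hη7 : η ^ (7 * C) ≤ η := pow_le_of_le_one hη0.le hη1 (by omega)
  calc (K : ℝ) * η ^ (100 * C) ≤ J * (56 * N) * η ^ (100 * C) := by gcongr
    _ = 56 * (J * η ^ (92 * C)) * (N * η ^ C) * η ^ (7 * C) := by ring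
    _ ≤ 56 * (V.toReal * B) * 2 * η := by
      gcongr 56 * ?_ * ?_ * ?_
      exact (mul_le_mul_of_nonneg_left hp J.cast_nonneg).trans hJ
    _ = 112 * V.toReal * B * η := by ring

end HaarMeasure

theorem energy_non_evacuation_general (n : ℕ) (hn : 5 ≤ n) (C₁ : ℕ) (hC₁ : C₁ = 6 * n)
    (D : ℝ) :
    ∃ η₀ : ℝ, 0 < η₀ ∧ η₀ < 1 ∧
      ∀ (η : ℝ), 0 < η → η < η₀ →
      ∀ (f : En n → ℂ), Measurable f →
      (∫⁻ x, (‖f x‖₊ : ℝ≥0∞) ^ ((2 * (n : ℝ)) / ((n : ℝ) - 2)) ≤ ENNReal.ofReal D) →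
      ∀ (K : ℕ), 1 ≤ K →
      ∀ (ℓ : ℕ → ℝ), (∀ k < K, 0 < ℓ k) →
      (∀ k, k + 1 < K → 2 * ℓ (k + 1) ≤ ℓ k) →
      (∀ k < K,
        ENNReal.ofReal (η ^ C₁ * ℓ k)
          ≤ ∫⁻ x in {x : En n |
              η ^ C₁ * Real.sqrt (ℓ k) ≤ ‖x‖ ∧ ‖x‖ ≤ (η ^ (27 * C₁))⁻¹ * Real.sqrt (ℓ k)},
              (‖f x‖₊ : ℝ≥0∞) ^ 2) →
      (K : ℝ) ≤ (η ^ (100 * C₁))⁻¹ := by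
  set M := 112 * (volume (ball (0 : En n) 1) ^ (2 / ((n : ℝ) - 2))).toReal * D.toNNReal
  have hM : 0 ≤ M := by positivity
  refine ⟨1 / (M + 2), by positivity, by rw [div_lt_one (by positivity)]; linarith, ?_⟩
  intro η hη hηη₀ f hf hfD K _ ℓ hℓ hstep hmass
  have hηM : η * (M + 2) < 1 := (lt_div_iff₀ (by positivity)).mp hηη₀
  have hbound := natCast_mul_pow_le_of_le_setLIntegral_annulus volume finrank_euclideanSpace_fin
    hn (C := C₁) (by omega) hη (by nlinarith) hf.nnnorm.coe_nnreal_ennreal hfD hℓ hstep hmass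
  rw [← one_div, le_div_iff₀ (by positivity)]
  calc (K : ℝ) * η ^ (100 * C₁) ≤ M * η := hbound
    _ ≤ 1 := by nlinarith

/-- Energy non-evacuation: there is `η₀ ∈ (0,1)`, depending only on `n ≥ 5` and `D`, such
that for all `η ∈ (0,η₀)`, any function with `L^{2n/(n-2)}` mass at most `D` can concentrate
`L²` mass `≥ η^{C₁} ℓ_k` on at most `η^{-100C₁}` annuli
`{η^{C₁} ℓ_k^{1/2} ≤ ‖x‖ ≤ η^{-27C₁} ℓ_k^{1/2}}` whose scales decrease geometrically.
Here `C₁ = 6n`. -/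
theorem energy_non_evacuation (n : ℕ) (hn : 5 ≤ n) (C₁ : ℕ) (hC₁ : C₁ = 6 * n)
    (D : ℝ) (hD : 0 < D) :
    ∃ η₀ : ℝ, 0 < η₀ ∧ η₀ < 1 ∧
      ∀ (η : ℝ), 0 < η → η < η₀ →
      ∀ (f : En n → ℂ), Measurable f →
      (∫⁻ x, (‖f x‖₊ : ℝ≥0∞) ^ ((2 * (n : ℝ)) / ((n : ℝ) - 2)) ≤ ENNReal.ofReal D) →
      ∀ (K : ℕ), 1 ≤ K →
      ∀ (ℓ : ℕ → ℝ), (∀ k < K, 0 < ℓ k) →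
      (∀ k, k + 1 < K → 2 * ℓ (k + 1) ≤ ℓ k) →
      (∀ k < K,
        ENNReal.ofReal (η ^ C₁ * ℓ k)
          ≤ ∫⁻ x in {x : En n |
              η ^ C₁ * Real.sqrt (ℓ k) ≤ ‖x‖ ∧ ‖x‖ ≤ (η ^ (27 * C₁))⁻¹ * Real.sqrt (ℓ k)},
              (‖f x‖₊ : ℝ≥0∞) ^ 2) →
      (K : ℝ) ≤ (η ^ (100 * C₁))⁻¹ :=
  energy_non_evacuation_general n hn C₁ hC₁ D

end
end

section
/- Let n ≥ 2. There exists a constant c > 0 depending only on n such that for every measurable radial function f : ℝⁿ → ℂ (i.e. f(x) = f(y) whenever ‖x‖ = ‖y‖), every ρ > 0, every r with 0 < r ≤ ρ/2, and every x₀ ∈ ℝⁿ with ‖x₀‖ = ρ, one has ∫_{{x : ρ−r ≤ ‖x‖ ≤ ρ+r}} |f(x)|² dx ≥ c · (ρ/r)^{n−1} · ∫_{B(x₀, r)} |f(x)|² dx, where B(x₀,r) is the Euclidean ball of radius r centered at x₀. -/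
open MeasureTheory Set
open scoped ENNReal NNReal

noncomputable section

/-!
A reflection carries any ball of radius `r` centred on the sphere of radius `ρ` to any other, so
a radial function has the same `L²` mass on all of them. A maximal `2r`-separated subset of that
sphere gives pairwise disjoint such balls, all inside the annulus `ρ - r ≤ ‖x‖ ≤ ρ + r`. Its
`2r`-balls cover the sphere, so its `3r`-balls cover the annulus, and comparing the volumes
`(ρ + r)ⁿ - (ρ - r)ⁿ ≥ 2r (ρ/2)ⁿ⁻¹` and `(3r)ⁿ` shows that there are at least
`6⁻ⁿ (ρ/r)ⁿ⁻¹` of them.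
-/

open Metric Module

theorem IsCompact.exists_finset_isSeparated_isCover {X : Type*} [PseudoMetricSpace X]
    {A : Set X} (hA : IsCompact A) {ε : ℝ≥0} (hε : ε ≠ 0) :
    ∃ M : Finset X, ↑M ⊆ A ∧ IsSeparated ε (M : Set X) ∧ IsCover ε A M := by
  have hpack : packingNumber ε A ≠ ⊤ := by
    obtain ⟨N, -, hN, hAN⟩ := exists_finite_isCover_of_isCompact (ε := ε / 2) (by simpa) hA
    refine ne_top_of_le_ne_top (encard_ne_top_iff.mpr hN) ?_
    calc packingNumber ε A = packingNumber (2 * (ε / 2)) A := by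
          rw [mul_div_cancel₀ _ two_ne_zero]
      _ ≤ externalCoveringNumber (ε / 2) A := packingNumber_two_mul_le_externalCoveringNumber _ _
      _ ≤ N.encard := hAN.externalCoveringNumber_le_encard
  have hfin : (maximalSeparatedSet ε A).Finite := by
    rw [← encard_ne_top_iff, encard_maximalSeparatedSet hpack]
    exact hpack
  refine ⟨hfin.toFinset, ?_, ?_, ?_⟩ <;> rw [hfin.coe_toFinset]
  · exact maximalSeparatedSet_subset
  · exact isSeparated_maximalSeparatedSet
  · exact isCover_maximalSeparatedSet hpack

theorem one_div_six_pow_mul_div_pow_mul_le {d : ℕ} (hd : 0 < d) {ρ r : ℝ} (hr : 0 < r)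
    (hrρ : r ≤ ρ / 2) :
    (1 / 6 : ℝ) ^ d * (ρ / r) ^ (d - 1) * (3 * r) ^ d ≤ (ρ + r) ^ d - (ρ - r) ^ d := by
  obtain ⟨m, rfl⟩ := Nat.exists_eq_add_of_lt hd
  rw [zero_add, Nat.add_sub_cancel]
  have hgap : 2 * r * (ρ - r) ^ m ≤ (ρ + r) ^ (m + 1) - (ρ - r) ^ (m + 1) := by
    have := pow_le_pow_left₀ (by linarith) (by linarith : ρ - r ≤ ρ + r) m
    rw [pow_succ, pow_succ]
    nlinarith
  have hsix : 1 / 6 * (3 * r) * (ρ / r) = ρ / 2 := by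
    field_simp
    ring
  calc (1 / 6 : ℝ) ^ (m + 1) * (ρ / r) ^ m * (3 * r) ^ (m + 1) = r / 2 * (ρ / 2) ^ m := by
        rw [mul_right_comm, ← mul_pow, pow_succ', mul_assoc, ← mul_pow, hsix]
        ring
    _ ≤ 2 * r * (ρ - r) ^ m := by
        have hρ : 0 ≤ ρ / 2 := by linarith
        gcongr <;> linarith
    _ ≤ _ := hgap

section NormedAddCommGroup

variable {E : Type*} [NormedAddCommGroup E]

theorem annulus_eq_closedBall_diff_ball (a b : ℝ) :
    {z : E | a ≤ ‖z‖ ∧ ‖z‖ ≤ b} = closedBall 0 b \ ball 0 a := by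
  ext z
  simp [and_comm]

theorem ball_subset_annulus_of_mem_sphere {x : E} {ρ : ℝ} (hx : x ∈ sphere (0 : E) ρ) (r : ℝ) :
    ball x r ⊆ {z : E | ρ - r ≤ ‖z‖ ∧ ‖z‖ ≤ ρ + r} := by
  intro z hz
  have := (abs_norm_sub_norm_le z x).trans (mem_ball_iff_norm.mp hz).le
  rw [mem_sphere_zero_iff_norm.mp hx, abs_le] at this
  constructor <;> linarith

variable [NormedSpace ℝ E]

theorem exists_mem_sphere_dist_eq {z : E} (hz : z ≠ 0) (ρ : ℝ) (hρ : 0 ≤ ρ) :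
    ∃ y ∈ sphere (0 : E) ρ, dist z y = |‖z‖ - ρ| := by
  have hz' : 0 < ‖z‖ := norm_pos_iff.mpr hz
  refine ⟨(ρ / ‖z‖) • z, ?_, ?_⟩
  · rw [mem_sphere_zero_iff_norm, norm_smul, Real.norm_of_nonneg (by positivity),
      div_mul_cancel₀ _ hz'.ne']
  · have : (1 - ρ / ‖z‖) * ‖z‖ = ‖z‖ - ρ := by field_simp
    rw [dist_eq_norm, ← this, abs_mul, abs_of_pos hz', ← Real.norm_eq_abs, ← norm_smul, sub_smul,
      one_smul]

theorem annulus_subset_biUnion_closedBall {ρ r : ℝ} (hrρ : r < ρ) {M : Set E}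
    (hM : sphere (0 : E) ρ ⊆ ⋃ x ∈ M, closedBall x (2 * r)) :
    {z : E | ρ - r ≤ ‖z‖ ∧ ‖z‖ ≤ ρ + r} ⊆ ⋃ x ∈ M, closedBall x (3 * r) := by
  rintro z ⟨hz₁, hz₂⟩
  obtain ⟨y, hy, hzy⟩ := exists_mem_sphere_dist_eq (norm_pos_iff.mp (by linarith)) ρ (by linarith)
  obtain ⟨x, hx, hyx⟩ := mem_iUnion₂.mp (hM hy)
  refine mem_iUnion₂.mpr ⟨x, hx, ?_⟩
  have : |‖z‖ - ρ| ≤ r := abs_le.mpr ⟨by linarith, by linarith⟩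
  rw [mem_closedBall] at hyx ⊢
  linarith [dist_triangle z y x]

variable [FiniteDimensional ℝ E]

theorem addHaar_annulus [MeasurableSpace E] [BorelSpace E] (μ : Measure E) [μ.IsAddHaarMeasure]
    {a b : ℝ} (ha : 0 < a) (hab : a ≤ b) :
    μ {z : E | a ≤ ‖z‖ ∧ ‖z‖ ≤ b} =
      ENNReal.ofReal (b ^ finrank ℝ E - a ^ finrank ℝ E) * μ (ball 0 1) := by
  rw [annulus_eq_closedBall_diff_ball,
    measure_sdiff (ball_subset_closedBall.trans' (ball_subset_ball hab))
      measurableSet_ball.nullMeasurableSet measure_ball_lt_top.ne,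
    Measure.addHaar_closedBall μ 0 (ha.le.trans hab), Measure.addHaar_ball_of_pos μ 0 ha,
    ← ENNReal.sub_mul (fun _ _ => measure_ball_lt_top.ne), ENNReal.ofReal_sub _ (by positivity)]

theorem pow_sub_pow_le_card_mul_pow {a b s : ℝ} (ha : 0 < a) (hab : a ≤ b) (hs : 0 ≤ s)
    {T : Finset E} (hT : {z : E | a ≤ ‖z‖ ∧ ‖z‖ ≤ b} ⊆ ⋃ x ∈ T, closedBall x s) :
    b ^ finrank ℝ E - a ^ finrank ℝ E ≤ T.card * s ^ finrank ℝ E := by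
  borelize E
  set μ : Measure E := Measure.addHaar
  have hvol : μ {z : E | a ≤ ‖z‖ ∧ ‖z‖ ≤ b} ≤
      T.card * (ENNReal.ofReal (s ^ finrank ℝ E) * μ (ball 0 1)) :=
    calc μ {z : E | a ≤ ‖z‖ ∧ ‖z‖ ≤ b} ≤ μ (⋃ x ∈ T, closedBall x s) := measure_mono hT
      _ ≤ ∑ x ∈ T, μ (closedBall x s) := measure_biUnion_finset_le T _
      _ = T.card * (ENNReal.ofReal (s ^ finrank ℝ E) * μ (ball 0 1)) := by
        simp [Measure.addHaar_closedBall μ _ hs]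
  rw [addHaar_annulus μ ha hab, ← mul_assoc,
    ENNReal.mul_le_mul_iff_left (measure_ball_pos μ 0 one_pos).ne' measure_ball_lt_top.ne,
    ← ENNReal.ofReal_natCast, ← ENNReal.ofReal_mul (by positivity)] at hvol
  exact (ENNReal.ofReal_le_ofReal_iff (by positivity)).mp hvol

theorem exists_finset_sphere_pairwiseDisjoint_ball [Nontrivial E] {ρ r : ℝ} (hr : 0 < r)
    (hrρ : r ≤ ρ / 2) :
    ∃ T : Finset E, ↑T ⊆ sphere (0 : E) ρ ∧ (T : Set E).PairwiseDisjoint (ball · r) ∧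
      (1 / 6 : ℝ) ^ finrank ℝ E * (ρ / r) ^ (finrank ℝ E - 1) ≤ T.card := by
  obtain ⟨T, hTsphere, hTsep, hTcover⟩ :=
    (isCompact_sphere (0 : E) ρ).exists_finset_isSeparated_isCover (ε := (2 * r).toNNReal)
      (by simpa)
  refine ⟨T, hTsphere, fun x hx y hy hxy => ball_disjoint_ball ?_, ?_⟩
  · have hsep : ENNReal.ofReal (2 * r) < edist x y := hTsep hx hy hxy
    rw [edist_dist, ENNReal.ofReal_lt_ofReal_iff_of_nonneg (by positivity)] at hsep
    linarith
  · rw [isCover_iff_subset_iUnion_closedBall, Real.coe_toNNReal _ (by positivity)] at hTcover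
    have hcard := pow_sub_pow_le_card_mul_pow (by linarith) (by linarith) (by positivity)
      (annulus_subset_biUnion_closedBall (by linarith) hTcover)
    exact le_of_mul_le_mul_right ((one_div_six_pow_mul_div_pow_mul_le finrank_pos hr hrρ).trans
      hcard) (by positivity)

end NormedAddCommGroup

theorem setLIntegral_ball_eq_of_norm_eq {E : Type*} [NormedAddCommGroup E]
    [InnerProductSpace ℝ E] [FiniteDimensional ℝ E] [MeasurableSpace E] [BorelSpace E]
    {g : E → ℝ≥0∞} (hg : ∀ x y, ‖x‖ = ‖y‖ → g x = g y) {x₀ x₁ : E} (h : ‖x₀‖ = ‖x₁‖) (r : ℝ) :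
    ∫⁻ x in ball x₁ r, g x = ∫⁻ x in ball x₀ r, g x := by
  set e : E ≃ₗᵢ[ℝ] E := Submodule.reflection (ℝ ∙ (x₀ - x₁))ᗮ
  have he : e x₀ = x₁ := Submodule.reflection_sub h
  have hpre : e ⁻¹' ball x₁ r = ball x₀ r := by
    ext x
    simp only [mem_preimage, mem_ball, ← he, e.dist_map]
  rw [← e.measurePreserving.setLIntegral_comp_preimage_emb e.toHomeomorph.measurableEmbedding,
    hpre]
  exact setLIntegral_congr_fun measurableSet_ball fun x _ => hg _ _ (e.norm_map x)

theorem radial_annulus_mass_general (n : ℕ) :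
    ∃ c : ℝ, 0 < c ∧
      ∀ (f : En n → ℂ), Measurable f → (∀ x y : En n, ‖x‖ = ‖y‖ → f x = f y) →
      ∀ (ρ r : ℝ), 0 < ρ → 0 < r → r ≤ ρ / 2 →
      ∀ (x₀ : En n), ‖x₀‖ = ρ →
      ENNReal.ofReal (c * (ρ / r) ^ (n - 1)) *
          (∫⁻ x in Metric.ball x₀ r, (‖f x‖₊ : ℝ≥0∞) ^ 2)
        ≤ ∫⁻ x in {x : En n | ρ - r ≤ ‖x‖ ∧ ‖x‖ ≤ ρ + r}, (‖f x‖₊ : ℝ≥0∞) ^ 2 := by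
  refine ⟨(1 / 6 : ℝ) ^ n, by positivity, fun f _ hf ρ r hρ hr hrρ x₀ hx₀ => ?_⟩
  have : Nontrivial (En n) := nontrivial_of_ne x₀ 0 (norm_pos_iff.mp (hx₀ ▸ hρ))
  obtain ⟨T, hTsphere, hTdisj, hTcard⟩ :=
    exists_finset_sphere_pairwiseDisjoint_ball (E := En n) hr hrρ
  rw [finrank_euclideanSpace_fin] at hTcard
  set g : En n → ℝ≥0∞ := fun x => (‖f x‖₊ : ℝ≥0∞) ^ 2
  have hballs : ∀ y ∈ T, ∫⁻ x in ball y r, g x = ∫⁻ x in ball x₀ r, g x := fun y hy =>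
    setLIntegral_ball_eq_of_norm_eq (fun x y hxy => by simp only [g, hf x y hxy])
      (by rw [hx₀, mem_sphere_zero_iff_norm.mp (hTsphere hy)]) r
  calc ENNReal.ofReal ((1 / 6 : ℝ) ^ n * (ρ / r) ^ (n - 1)) * ∫⁻ x in ball x₀ r, g x
      ≤ T.card * ∫⁻ x in ball x₀ r, g x := by
        gcongr
        exact ENNReal.ofReal_le_of_le_toReal (by simpa using hTcard)
    _ = ∑ y ∈ T, ∫⁻ x in ball y r, g x := by
        rw [Finset.sum_congr rfl hballs, Finset.sum_const, nsmul_eq_mul]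
    _ = ∫⁻ x in ⋃ y ∈ T, ball y r, g x :=
        (lintegral_biUnion_finset hTdisj (fun _ _ => measurableSet_ball) g).symm
    _ ≤ _ := lintegral_mono_set (iUnion₂_subset fun y hy =>
        ball_subset_annulus_of_mem_sphere (hTsphere hy) r)

/-- For a radial function, the `L²` mass of a thin annulus of radius `ρ` and width `2r`
dominates `c (ρ/r)^{n-1}` times the mass of any ball of radius `r` centered on the
sphere of radius `ρ`. -/
theorem radial_annulus_mass (n : ℕ) (hn : 2 ≤ n) :
    ∃ c : ℝ, 0 < c ∧
      ∀ (f : En n → ℂ), Measurable f → (∀ x y : En n, ‖x‖ = ‖y‖ → f x = f y) →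
      ∀ (ρ r : ℝ), 0 < ρ → 0 < r → r ≤ ρ / 2 →
      ∀ (x₀ : En n), ‖x₀‖ = ρ →
      ENNReal.ofReal (c * (ρ / r) ^ (n - 1)) *
          (∫⁻ x in Metric.ball x₀ r, (‖f x‖₊ : ℝ≥0∞) ^ 2)
        ≤ ∫⁻ x in {x : En n | ρ - r ≤ ‖x‖ ∧ ‖x‖ ≤ ρ + r}, (‖f x‖₊ : ℝ≥0∞) ^ 2 :=
  radial_annulus_mass_general n

end
end
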